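/- arXiv:1509.04917 — 6 statements merged into one kernel-verified Lean document; each statement's English description precedes it below -/
import Mathlib

section
/- Let β > 0 and let Y₁, Y₂ : [0, τ) → (0, ∞) be C¹ solutions of Ẏ₁ = −2 Y₁^(−β) + Y₂^(−β) + F₁ and Ẏ₂ = −2 Y₂^(−β) + Y₁^(−β) + F₂, with continuous F₁, F₂ satisfying |F₁(t)| + |F₂(t)| ≤ η for all t, initial data Y₁(0) = A₁, Y₂(0) = A₂ with 1/2 ≤ A₁, A₂ ≤ 2, and η < 4^(−β)/2. Then Y₁(t) + Y₂(t) ≤ 4 for all t ∈ [0, τ) and (Y₁ + Y₂)(t)^(β+1) ≤ (A₁ + A₂)^(β+1) − (β+1)t/2, so τ is finite with τ ≤ 2·4^(β+1)/(β+1). -/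
/-! The total mass `S = Y₁ + Y₂` obeys `Ṡ = -(Y₁^(-β) + Y₂^(-β)) + F₁ + F₂`. While `S ≤ 4`, the
term `Y₁^(-β) ≥ S^(-β) ≥ 4^(-β) > 2η` dominates the forcing, so `Ṡ ≤ -S^(-β)/2 < 0`; hence `S`
never climbs back to the level `4` it starts below. Then `d/dt S^(β+1) = (β+1) S^β Ṡ ≤ -(β+1)/2`,
so `S^(β+1)` decreases at least linearly, and since it stays nonnegative the existence time is
bounded by `2 (A₁ + A₂)^(β+1)/(β+1) ≤ 2·4^(β+1)/(β+1)`. -/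

open Set

theorem le_of_hasDerivAt_neg_of_eq {f f' : ℝ → ℝ} {a b M : ℝ}
    (hf : ∀ x ∈ Icc a b, HasDerivAt f (f' x) x) (ha : f a ≤ M)
    (hM : ∀ x ∈ Ico a b, f x = M → f' x < 0) : ∀ x ∈ Icc a b, f x ≤ M :=
  fun _ hx => image_le_of_deriv_right_lt_deriv_boundary' (B := fun _ => M) (B' := fun _ => 0)
    (fun x hx => (hf x hx).continuousAt.continuousWithinAt)
    (fun x hx => (hf x (Ico_subset_Icc_self hx)).hasDerivWithinAt) ha continuousOn_const
    (fun x _ => (hasDerivAt_const x M).hasDerivWithinAt) hM hx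

theorem rpow_add_one_le_of_hasDerivAt_le {y y' : ℝ → ℝ} {β c t : ℝ} (hβ : 0 ≤ β + 1)
    (ht : 0 ≤ t) (hpos : ∀ s ∈ Icc 0 t, 0 < y s)
    (hy : ∀ s ∈ Icc 0 t, HasDerivAt y (y' s) s)
    (hy' : ∀ s ∈ Icc 0 t, y' s ≤ -c * y s ^ (-β)) :
    y t ^ (β + 1) ≤ y 0 ^ (β + 1) - (β + 1) * c * t := by
  set g : ℝ → ℝ := fun u => y u ^ (β + 1) + (β + 1) * c * u
  have hg : ∀ s ∈ Icc 0 t,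
      HasDerivAt g (y' s * (β + 1) * y s ^ β + (β + 1) * c) s := by
    intro s hs
    have h := ((hy s hs).rpow_const (p := β + 1) (Or.inl (hpos s hs).ne')).add
      ((hasDerivAt_id s).const_mul ((β + 1) * c))
    exact h.congr_deriv (by simp)
  have hg' : ∀ s ∈ Icc 0 t, y' s * (β + 1) * y s ^ β + (β + 1) * c ≤ 0 := by
    intro s hs
    have hp : 0 < y s ^ β := Real.rpow_pos_of_pos (hpos s hs) β
    have hmul : y' s * y s ^ β ≤ -c := by
      calc y' s * y s ^ β ≤ -c * (y s ^ β)⁻¹ * y s ^ β := by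
            rw [← Real.rpow_neg (hpos s hs).le]; exact mul_le_mul_of_nonneg_right (hy' s hs) hp.le
        _ = -c := by field_simp
    have := mul_nonpos_of_nonneg_of_nonpos hβ (by linarith : y' s * y s ^ β + c ≤ 0)
    linarith
  have hanti : AntitoneOn g (Icc 0 t) :=
    antitoneOn_of_hasDerivWithinAt_nonpos (convex_Icc 0 t)
      (fun s hs => (hg s hs).continuousAt.continuousWithinAt)
      (fun s hs => (hg s (interior_subset hs)).hasDerivWithinAt)
      (fun s hs => hg' s (interior_subset hs))
  have := hanti ⟨le_rfl, ht⟩ ⟨ht, le_rfl⟩ ht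
  simp only [g] at this
  linarith

theorem neg_rpow_add_neg_rpow_add_le {x₁ x₂ β M η f : ℝ} (hx₁ : 0 < x₁) (hx₂ : 0 < x₂)
    (hβ : 0 ≤ β) (hM : x₁ + x₂ ≤ M) (hf : f ≤ η) (hη : η < M ^ (-β) / 2) :
    -(x₁ ^ (-β) + x₂ ^ (-β)) + f ≤ -(1 / 2) * (x₁ + x₂) ^ (-β) := by
  have h₁ : (x₁ + x₂) ^ (-β) ≤ x₁ ^ (-β) :=
    Real.rpow_le_rpow_of_nonpos hx₁ (by linarith) (by linarith)
  have h₂ : 0 < x₂ ^ (-β) := Real.rpow_pos_of_pos hx₂ _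
  have hM' : M ^ (-β) ≤ (x₁ + x₂) ^ (-β) :=
    Real.rpow_le_rpow_of_nonpos (by linarith) hM (by linarith)
  linarith

theorem le_of_forall_mem_Ico_le {τ c : ℝ} (hc : 0 ≤ c) (h : ∀ t ∈ Ico 0 τ, t ≤ c) : τ ≤ c :=
  le_of_forall_lt_imp_le_of_dense fun t ht =>
    (le_or_gt 0 t).elim (fun ht0 => h t ⟨ht0, ht⟩) fun ht0 => ht0.le.trans hc

theorem stmt6_general (β τ A₁ A₂ η : ℝ) (hβ : 0 < β)
    (Y₁ Y₂ F₁ F₂ : ℝ → ℝ)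
    (hη : ∀ t, |F₁ t| + |F₂ t| ≤ η)
    (hA₁ : 1 / 2 ≤ A₁) (hA₁' : A₁ ≤ 2) (hA₂ : 1 / 2 ≤ A₂) (hA₂' : A₂ ≤ 2)
    (hηsmall : η < (4 : ℝ) ^ (-β) / 2)
    (hY₁0 : Y₁ 0 = A₁) (hY₂0 : Y₂ 0 = A₂)
    (hpos : ∀ t ∈ Set.Ico (0 : ℝ) τ, 0 < Y₁ t ∧ 0 < Y₂ t)
    (heq₁ : ∀ t ∈ Set.Ico (0 : ℝ) τ,
      HasDerivAt Y₁ (-2 * (Y₁ t) ^ (-β) + (Y₂ t) ^ (-β) + F₁ t) t)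
    (heq₂ : ∀ t ∈ Set.Ico (0 : ℝ) τ,
      HasDerivAt Y₂ (-2 * (Y₂ t) ^ (-β) + (Y₁ t) ^ (-β) + F₂ t) t) :
    (∀ t ∈ Set.Ico (0 : ℝ) τ, Y₁ t + Y₂ t ≤ 4 ∧
      (Y₁ t + Y₂ t) ^ (β + 1) ≤ (A₁ + A₂) ^ (β + 1) - (β + 1) * t / 2) ∧
    τ ≤ 2 * (4 : ℝ) ^ (β + 1) / (β + 1) := by
  set S' : ℝ → ℝ := fun s => -(Y₁ s ^ (-β) + Y₂ s ^ (-β)) + (F₁ s + F₂ s)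
  have hS : ∀ s ∈ Ico 0 τ, HasDerivAt (fun u => Y₁ u + Y₂ u) (S' s) s := fun s hs =>
    ((heq₁ s hs).add (heq₂ s hs)).congr_deriv (by ring)
  have hSpos : ∀ s ∈ Ico 0 τ, 0 < Y₁ s + Y₂ s := fun s hs => add_pos (hpos s hs).1 (hpos s hs).2
  have hS' : ∀ s ∈ Ico 0 τ, Y₁ s + Y₂ s ≤ 4 → S' s ≤ -(1 / 2) * (Y₁ s + Y₂ s) ^ (-β) :=
    fun s hs h4 => neg_rpow_add_neg_rpow_add_le (hpos s hs).1 (hpos s hs).2 hβ.le h4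
      ((add_le_add (le_abs_self _) (le_abs_self _)).trans (hη s)) hηsmall
  have hsub : ∀ t ∈ Ico 0 τ, Icc 0 t ⊆ Ico 0 τ := fun t ht s hs => ⟨hs.1, hs.2.trans_lt ht.2⟩
  have hle : ∀ t ∈ Ico 0 τ, ∀ s ∈ Icc 0 t, Y₁ s + Y₂ s ≤ 4 := fun t ht =>
    le_of_hasDerivAt_neg_of_eq (fun s hs => hS s (hsub t ht hs)) (by linarith) fun s hs h4 => by
      have hs' := hsub t ht (Ico_subset_Icc_self hs)
      linarith [hS' s hs' h4.le, Real.rpow_pos_of_pos (hSpos s hs') (-β)]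
  have hdecay : ∀ t ∈ Ico 0 τ,
      (Y₁ t + Y₂ t) ^ (β + 1) ≤ (A₁ + A₂) ^ (β + 1) - (β + 1) * t / 2 := by
    intro t ht
    have := rpow_add_one_le_of_hasDerivAt_le (y := fun u => Y₁ u + Y₂ u) (c := 1 / 2)
      (by linarith) ht.1 (fun s hs => hSpos s (hsub t ht hs))
      (fun s hs => hS s (hsub t ht hs)) (fun s hs => hS' s (hsub t ht hs) (hle t ht s hs))
    simp only [hY₁0, hY₂0] at this
    linarith
  refine ⟨fun t ht => ⟨hle t ht t ⟨ht.1, le_rfl⟩, hdecay t ht⟩, ?_⟩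
  refine le_of_forall_mem_Ico_le (by positivity) fun t ht => ?_
  have hA : (A₁ + A₂) ^ (β + 1) ≤ (4 : ℝ) ^ (β + 1) :=
    Real.rpow_le_rpow (by linarith) (by linarith) (by linarith)
  rw [le_div_iff₀ (by linarith)]
  linarith [hdecay t ht, Real.rpow_nonneg (hSpos t ht).le (β + 1)]

theorem stmt6 (β τ A₁ A₂ η : ℝ) (hβ : 0 < β) (hτ : 0 < τ)
    (Y₁ Y₂ F₁ F₂ : ℝ → ℝ)
    (hF₁ : Continuous F₁) (hF₂ : Continuous F₂)
    (hη : ∀ t, |F₁ t| + |F₂ t| ≤ η)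
    (hA₁ : 1 / 2 ≤ A₁) (hA₁' : A₁ ≤ 2) (hA₂ : 1 / 2 ≤ A₂) (hA₂' : A₂ ≤ 2)
    (hηsmall : η < (4 : ℝ) ^ (-β) / 2)
    (hY₁0 : Y₁ 0 = A₁) (hY₂0 : Y₂ 0 = A₂)
    (hpos : ∀ t ∈ Set.Ico (0 : ℝ) τ, 0 < Y₁ t ∧ 0 < Y₂ t)
    (heq₁ : ∀ t ∈ Set.Ico (0 : ℝ) τ,
      HasDerivAt Y₁ (-2 * (Y₁ t) ^ (-β) + (Y₂ t) ^ (-β) + F₁ t) t)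
    (heq₂ : ∀ t ∈ Set.Ico (0 : ℝ) τ,
      HasDerivAt Y₂ (-2 * (Y₂ t) ^ (-β) + (Y₁ t) ^ (-β) + F₂ t) t) :
    (∀ t ∈ Set.Ico (0 : ℝ) τ, Y₁ t + Y₂ t ≤ 4 ∧
      (Y₁ t + Y₂ t) ^ (β + 1) ≤ (A₁ + A₂) ^ (β + 1) - (β + 1) * t / 2) ∧
    τ ≤ 2 * (4 : ℝ) ^ (β + 1) / (β + 1) :=
  stmt6_general β τ A₁ A₂ η hβ Y₁ Y₂ F₁ F₂ hη hA₁ hA₁' hA₂ hA₂' hηsmall hY₁0 hY₂0 hpos heq₁ heq₂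
end

section
/- Fix β > 0, τ̄ > 0, and 0 ≤ T < τ̄. The matrix-valued function Φ(t) = (1/2)((τ̄−T)/(τ̄−t))^(β/(β+1)) [[1,1],[1,1]] + (1/2)((τ̄−T)/(τ̄−t))^(3β/(β+1)) [[1,−1],[−1,1]] satisfies Φ(T) = Id and d/dt Φ(t) = (β/(β+1)) · (1/(τ̄−t)) · [[2,−1],[−1,2]] · Φ(t) for all t ∈ [T, τ̄). -/
noncomputable def fundMatrix (β T τ : ℝ) (t : ℝ) : Matrix (Fin 2) (Fin 2) ℝ :=
  (((1 : ℝ) / 2) * ((τ - T) / (τ - t)) ^ (β / (β + 1))) •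
      (!![1, 1; 1, 1] : Matrix (Fin 2) (Fin 2) ℝ) +
    (((1 : ℝ) / 2) * ((τ - T) / (τ - t)) ^ (3 * β / (β + 1))) •
      (!![1, -1; -1, 1] : Matrix (Fin 2) (Fin 2) ℝ)

/-! The matrix `!![2, -1; -1, 2]` has eigenvalues `1` and `3`, with spectral projections
`½ !![1, 1; 1, 1]` and `½ !![1, -1; -1, 1]`. In this eigenbasis the linear system decouples into
the scalar equations `y' = λ a y / (τ - t)`, `λ ∈ {1, 3}`, with `a = β / (β + 1)`, solved by
`((τ - T) / (τ - t)) ^ (λ a)`, which equal `1` at `t = T`. -/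

lemma hasDerivAt_div_sub_rpow {c τ t : ℝ} (p : ℝ) (hc : c ≠ 0) (ht : t ≠ τ) :
    HasDerivAt (fun s => (c / (τ - s)) ^ p) (p * (c / (τ - t)) ^ p / (τ - t)) t := by
  have hτt : τ - t ≠ 0 := sub_ne_zero.2 ht.symm
  have hquot : HasDerivAt (fun s => c / (τ - s)) (c / (τ - t) ^ 2) t := by
    simpa using (hasDerivAt_const t c).fun_div ((hasDerivAt_id t).const_sub τ) hτt
  convert hquot.rpow_const (p := p) (Or.inl (div_ne_zero hc hτt)) using 1
  rw [Real.rpow_sub_one (div_ne_zero hc hτt)]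
  field_simp

lemma hasDerivAt_smul_add_smul_apply {m n : Type*} {f g : ℝ → ℝ} {f' g' t : ℝ}
    (hf : HasDerivAt f f' t) (hg : HasDerivAt g g' t) (M N : Matrix m n ℝ) (i : m) (j : n) :
    HasDerivAt (fun s => (f s • M + g s • N) i j) ((f' • M + g' • N) i j) t := by
  simpa only [Matrix.add_apply, Matrix.smul_apply, smul_eq_mul] using
    (hf.mul_const (M i j)).fun_add (hg.mul_const (N i j))

lemma mul_allOnes_two : !![(2 : ℝ), -1; -1, 2] * !![1, 1; 1, 1] = !![1, 1; 1, 1] := by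
  ext i j; fin_cases i <;> fin_cases j <;> norm_num [Matrix.mul_apply]

lemma mul_alternating_two :
    !![(2 : ℝ), -1; -1, 2] * !![1, -1; -1, 1] = (3 : ℝ) • !![1, -1; -1, 1] := by
  ext i j; fin_cases i <;> fin_cases j <;> norm_num [Matrix.mul_apply]

lemma half_smul_allOnes_add_half_smul_alternating :
    ((1 : ℝ) / 2) • !![(1 : ℝ), 1; 1, 1] + ((1 : ℝ) / 2) • !![1, -1; -1, 1] = 1 := by
  ext i j; fin_cases i <;> fin_cases j <;> norm_num

theorem stmt8_general (β T τ : ℝ) (hTτ : T < τ) :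
    fundMatrix β T τ T = 1 ∧
    ∀ t ∈ Set.Ico T τ, ∀ i j : Fin 2,
      HasDerivAt (fun s => fundMatrix β T τ s i j)
        ((((β / (β + 1)) * (τ - t)⁻¹) •
          ((!![2, -1; -1, 2] : Matrix (Fin 2) (Fin 2) ℝ) * fundMatrix β T τ t)) i j) t := by
  have hτT : τ - T ≠ 0 := sub_ne_zero.2 hTτ.ne'
  refine ⟨?_, fun t ht i j => ?_⟩
  · simpa [fundMatrix, div_self hτT] using half_smul_allOnes_add_half_smul_alternating
  have ht' : t ≠ τ := ht.2.ne
  have hslow := (hasDerivAt_div_sub_rpow (β / (β + 1)) hτT ht').const_mul ((1 : ℝ) / 2)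
  have hfast := (hasDerivAt_div_sub_rpow (3 * β / (β + 1)) hτT ht').const_mul ((1 : ℝ) / 2)
  refine (hasDerivAt_smul_add_smul_apply hslow hfast
    !![1, 1; 1, 1] !![1, -1; -1, 1] i j).congr_deriv (congrFun (congrFun ?_ i) j)
  rw [fundMatrix, Matrix.mul_add, Matrix.mul_smul, Matrix.mul_smul, mul_allOnes_two,
    mul_alternating_two, smul_smul, smul_add, smul_smul, smul_smul, mul_div_assoc 3 β]
  congr 2 <;> ring

theorem stmt8 (β T τ : ℝ) (hβ : 0 < β) (hτ : 0 < τ) (hT : 0 ≤ T) (hTτ : T < τ) :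
    fundMatrix β T τ T = 1 ∧
    ∀ t ∈ Set.Ico T τ, ∀ i j : Fin 2,
      HasDerivAt (fun s => fundMatrix β T τ s i j)
        ((((β / (β + 1)) * (τ - t)⁻¹) •
          ((!![2, -1; -1, 2] : Matrix (Fin 2) (Fin 2) ℝ) * fundMatrix β T τ t)) i j) t :=
  stmt8_general β T τ hTτ
end

section
/- Let β > 0, 0 ≤ T < τ̄, and let Y : [T, τ̄) → ℝ² solve Ẏ = (β/(β+1))·(1/(τ̄−t))·[[2,−1],[−1,2]] Y + F(t) with Y(T) = 0 and F continuous. Then there is a constant C (depending only on β) with |Y_p(t)| ≤ C ∫_T^t ((τ̄−s)/(τ̄−t))^(3β/(β+1)) (|F₁(s)| + |F₂(s)|) ds for p = 1, 2 and all t ∈ [T, τ̄). -/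
/-!
Adding and subtracting the two equations diagonalises the system: `u = Y₀ + Y₁` and
`v = Y₀ - Y₁` solve the scalar equations `w' = (k/(τ - t)) w + G` with `k = β/(β+1)` and
`k = 3β/(β+1)` (the eigenvalues of `!![2, -1; -1, 2]` are `1` and `3`). The integrating factor
`(τ - t)^k` solves each scalar equation explicitly, and since `(τ - s)/(τ - t) ≥ 1` the weight
with the larger exponent `3β/(β+1)` dominates both. Then `Y_p = (u ± v)/2` gives the bound
with `C = 1`.
-/

open Set

section ScalarMode

variable {a τ : ℝ} {u G : ℝ → ℝ}

theorem hasDerivAt_rpow_sub_mul {s : ℝ} (hs : s < τ)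
    (hu : HasDerivAt u (a * (τ - s)⁻¹ * u s + G s) s) :
    HasDerivAt (fun x => (τ - x) ^ a * u x) ((τ - s) ^ a * G s) s := by
  have hpos : 0 < τ - s := sub_pos.2 hs
  have hfactor : HasDerivAt (fun x : ℝ => (τ - x) ^ a) (a * (τ - s) ^ (a - 1) * (-1)) s :=
    (Real.hasDerivAt_rpow_const (Or.inl hpos.ne')).comp s ((hasDerivAt_id s).const_sub τ)
  refine (hfactor.mul hu).congr_deriv ?_
  rw [Real.rpow_sub_one hpos.ne']
  field_simp
  ring

theorem eq_integral_of_hasDerivAt_inv_sub {T t : ℝ} (hTt : T ≤ t) (htτ : t < τ)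
    (hG : Continuous G) (hu0 : u T = 0)
    (hu : ∀ s ∈ Icc T t, HasDerivAt u (a * (τ - s)⁻¹ * u s + G s) s) :
    u t = ∫ s in T..t, ((τ - s) / (τ - t)) ^ a * G s := by
  have hpos : ∀ s ∈ Icc T t, 0 < τ - s := fun s hs => by linarith [hs.2]
  have hweight : ContinuousOn (fun s => (τ - s) ^ a) (Icc T t) := fun s hs =>
    ((continuous_const.sub continuous_id).continuousAt.rpow_const
      (Or.inl (hpos s hs).ne')).continuousWithinAt
  have hftc := intervalIntegral.integral_eq_sub_of_hasDerivAt
    (fun s hs => hasDerivAt_rpow_sub_mul (s := s) (by rw [uIcc_of_le hTt] at hs; linarith [hs.2])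
      (hu s (by rwa [uIcc_of_le hTt] at hs)))
    ((hweight.mul hG.continuousOn).intervalIntegrable_of_Icc hTt)
  rw [hu0, mul_zero, sub_zero] at hftc
  have hrewrite : ∀ s ∈ uIcc T t,
      ((τ - s) / (τ - t)) ^ a * G s = (τ - s) ^ a * G s / (τ - t) ^ a := fun s hs => by
    rw [uIcc_of_le hTt] at hs
    rw [Real.div_rpow (hpos s hs).le (hpos t ⟨hTt, le_rfl⟩).le, div_mul_eq_mul_div]
  rw [intervalIntegral.integral_congr hrewrite, intervalIntegral.integral_div, hftc,
    mul_div_cancel_left₀ _ (Real.rpow_pos_of_pos (hpos t ⟨hTt, le_rfl⟩) a).ne']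

theorem abs_le_integral_of_hasDerivAt_inv_sub {b T t : ℝ} {H : ℝ → ℝ} (hab : a ≤ b)
    (hTt : T ≤ t) (htτ : t < τ) (hG : Continuous G) (hH : Continuous H)
    (hGH : ∀ s, |G s| ≤ H s) (hu0 : u T = 0)
    (hu : ∀ s ∈ Icc T t, HasDerivAt u (a * (τ - s)⁻¹ * u s + G s) s) :
    |u t| ≤ ∫ s in T..t, ((τ - s) / (τ - t)) ^ b * H s := by
  have hratio : ∀ s ∈ Icc T t, 1 ≤ (τ - s) / (τ - t) := fun s hs =>
    (one_le_div (by linarith)).2 (by linarith [hs.2])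
  have hweight : ContinuousOn (fun s => ((τ - s) / (τ - t)) ^ b) (Icc T t) := fun s hs =>
    (((continuous_const.sub continuous_id).div_const _).continuousAt.rpow_const
      (Or.inl (zero_lt_one.trans_le (hratio s hs)).ne')).continuousWithinAt
  rw [eq_integral_of_hasDerivAt_inv_sub hTt htτ hG hu0 hu, ← Real.norm_eq_abs]
  refine intervalIntegral.norm_integral_le_of_norm_le hTt (Filter.Eventually.of_forall
    fun s hs => ?_) ((hweight.mul hH.continuousOn).intervalIntegrable_of_Icc hTt)
  have hr := hratio s (Ioc_subset_Icc_self hs)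
  rw [Real.norm_eq_abs, abs_mul, abs_of_nonneg (Real.rpow_nonneg (zero_le_one.trans hr) a)]
  exact mul_le_mul (Real.rpow_le_rpow_of_exponent_le hr hab) (hGH s) (abs_nonneg _)
    (Real.rpow_nonneg (zero_le_one.trans hr) b)

end ScalarMode

section Diagonalisation

variable {a k : ℝ} {Y F : ℝ → Fin 2 → ℝ} {t : ℝ}

theorem mulVec_two_neg_one_apply (y : Fin 2 → ℝ) :
    Matrix.mulVec !![2, -1; -1, 2] y 0 = 2 * y 0 - y 1 ∧
      Matrix.mulVec !![2, -1; -1, 2] y 1 = 2 * y 1 - y 0 := by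
  constructor <;> simp [Matrix.mulVec, Matrix.vecHead, Matrix.vecTail] <;> ring

theorem hasDerivAt_add_of_system
    (hY : ∀ p, HasDerivAt (fun s => Y s p)
      (a * k * Matrix.mulVec !![2, -1; -1, 2] (Y t) p + F t p) t) :
    HasDerivAt (fun s => Y s 0 + Y s 1) (a * k * (Y t 0 + Y t 1) + (F t 0 + F t 1)) t := by
  obtain ⟨h0, h1⟩ := mulVec_two_neg_one_apply (Y t)
  refine ((hY 0).add (hY 1)).congr_deriv ?_
  rw [h0, h1]
  ring

theorem hasDerivAt_sub_of_system
    (hY : ∀ p, HasDerivAt (fun s => Y s p)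
      (a * k * Matrix.mulVec !![2, -1; -1, 2] (Y t) p + F t p) t) :
    HasDerivAt (fun s => Y s 0 - Y s 1) (3 * a * k * (Y t 0 - Y t 1) + (F t 0 - F t 1)) t := by
  obtain ⟨h0, h1⟩ := mulVec_two_neg_one_apply (Y t)
  refine ((hY 0).sub (hY 1)).congr_deriv ?_
  rw [h0, h1]
  ring

theorem abs_apply_le_of_fin_two (y : Fin 2 → ℝ) (p : Fin 2) :
    |y p| ≤ (|y 0 + y 1| + |y 0 - y 1|) / 2 := by
  fin_cases p <;> simp only [Fin.zero_eta, Fin.mk_one]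
  · have h := abs_add_le (y 0 + y 1) (y 0 - y 1)
    rw [show y 0 + y 1 + (y 0 - y 1) = 2 * y 0 by ring, abs_mul, abs_two] at h
    linarith
  · have h := abs_sub (y 0 + y 1) (y 0 - y 1)
    rw [show y 0 + y 1 - (y 0 - y 1) = 2 * y 1 by ring, abs_mul, abs_two] at h
    linarith

end Diagonalisation

theorem stmt10 (β : ℝ) (hβ : 0 < β) :
    ∃ C : ℝ, 0 < C ∧
      ∀ T τ : ℝ, 0 ≤ T → T < τ →
        ∀ Y F : ℝ → Fin 2 → ℝ,
          (∀ p : Fin 2, Continuous fun s => F s p) →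
          Y T = 0 →
          (∀ t ∈ Set.Ico T τ, ∀ p : Fin 2,
            HasDerivAt (fun s => Y s p)
              (((β / (β + 1)) * (τ - t)⁻¹) * Matrix.mulVec !![2, -1; -1, 2] (Y t) p
                + F t p) t) →
          ∀ t ∈ Set.Ico T τ, ∀ p : Fin 2,
            |Y t p| ≤ C * ∫ s in T..t,
              ((τ - s) / (τ - t)) ^ (3 * β / (β + 1)) * (|F s 0| + |F s 1|) := by
  refine ⟨1, one_pos, fun T τ _ _ Y F hF hY0 hY t ht p => ?_⟩
  have hYs : ∀ s ∈ Icc T t, ∀ q, _ := fun s hs => hY s ⟨hs.1, hs.2.trans_lt ht.2⟩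
  have ha : β / (β + 1) ≤ 3 * (β / (β + 1)) := by
    have : 0 ≤ β / (β + 1) := by positivity
    linarith
  have hH : Continuous fun s => |F s 0| + |F s 1| := (hF 0).abs.add (hF 1).abs
  have hsum := abs_le_integral_of_hasDerivAt_inv_sub ha ht.1 ht.2 ((hF 0).add (hF 1)) hH
    (fun s => abs_add_le _ _) (by simp [hY0]) fun s hs => hasDerivAt_add_of_system (hYs s hs)
  have hdiff := abs_le_integral_of_hasDerivAt_inv_sub le_rfl ht.1 ht.2 ((hF 0).sub (hF 1)) hH
    (fun s => abs_sub _ _) (by simp [hY0]) fun s hs => hasDerivAt_sub_of_system (hYs s hs)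
  rw [one_mul, mul_div_assoc]
  linarith [abs_apply_le_of_fin_two (Y t) p]
end

section
/- Let β > 0 and let Y₁, Y₂ : (−∞, −1] → (0, ∞) be a C¹ solution of Ẏ₁ = −2Y₁^(−β) + Y₂^(−β), Ẏ₂ = −2Y₂^(−β) + Y₁^(−β) with Y₁(−1) = (4(β+1))^(1/(β+1)) and Y₂(−1) = 0 (limit value). If Y_min = min(Y₁,Y₂) and Y_max = max(Y₁,Y₂), then for all t ≤ −1: ((β+1)(−1−t))^(1/(β+1)) ≤ Y_min(t) ≤ Y_max(t) ≤ ((β+1)(3−t))^(1/(β+1)). -/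
/-!
For `Z_i = Y_i ^ (β + 1)` the system reads `Ż_i = (β + 1) ((Y_i / Y_j) ^ β - 2)`. Hence at any
time the larger of `Z₁, Z₂` has `Ż ≥ -(β + 1)` and the smaller has `Ż ≤ -(β + 1)`. A one-sided
comparison argument for the maximum (and minimum) of two differentiable functions then lets
`max Z` grow at most, and `min Z` at least, linearly with slope `β + 1` backwards from the terminal
values `Z(-1) = (4 (β + 1), 0)`; taking `(β + 1)`-th roots gives the bounds.
-/

open Set Filter Topology

theorem HasDerivAt.eventually_sub_div_sub_lt {φ : ℝ → ℝ} {d x M r : ℝ} (hφ : HasDerivAt φ d x)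
    (hle : φ x ≤ M) (hd : φ x = M → d < r) :
    ∀ᶠ z in 𝓝[>] x, (φ z - M) / (z - x) < r := by
  rcases hle.eq_or_lt with heq | hlt
  · have hslope : Tendsto (slope φ x) (𝓝[>] x) (𝓝 d) :=
      hφ.tendsto_slope.mono_left (nhdsWithin_mono x fun z hz => ne_of_gt hz)
    filter_upwards [hslope.eventually_lt_const (hd heq)] with z hz
    rwa [slope_def_field, heq] at hz
  · have hcont : ContinuousAt (fun z => φ z - M - r * (z - x)) x := by
      have := hφ.continuousAt
      fun_prop
    have hneg : ∀ᶠ z in 𝓝 x, φ z - M - r * (z - x) < 0 :=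
      hcont.eventually_lt continuousAt_const (by simpa using hlt)
    filter_upwards [nhdsWithin_le_nhds hneg, self_mem_nhdsWithin] with z hz (hxz : x < z)
    rw [div_lt_iff₀ (sub_pos.2 hxz)]
    linarith

theorem eventually_slope_max_lt {φ₁ φ₂ : ℝ → ℝ} {d₁ d₂ x r : ℝ}
    (h₁ : HasDerivAt φ₁ d₁ x) (h₂ : HasDerivAt φ₂ d₂ x)
    (hd₁ : φ₂ x ≤ φ₁ x → d₁ < r) (hd₂ : φ₁ x ≤ φ₂ x → d₂ < r) :
    ∀ᶠ z in 𝓝[>] x, slope (fun t => max (φ₁ t) (φ₂ t)) x z < r := by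
  set M := max (φ₁ x) (φ₂ x)
  have e₁ := h₁.eventually_sub_div_sub_lt (le_max_left _ _)
    fun h => hd₁ (h ▸ le_max_right _ _)
  have e₂ := h₂.eventually_sub_div_sub_lt (le_max_right _ _)
    fun h => hd₂ (h ▸ le_max_left _ _)
  filter_upwards [e₁, e₂, self_mem_nhdsWithin] with z hz₁ hz₂ (hxz : x < z)
  rw [slope_def_field, ← max_sub_sub_right, ← max_div_div_right (sub_pos.2 hxz).le]
  exact max_lt hz₁ hz₂

theorem max_le_max_add_mul_of_deriv_le {φ₁ φ₂ d₁ d₂ : ℝ → ℝ} {a b c : ℝ}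
    (hc₁ : ContinuousOn φ₁ (Icc a b)) (hc₂ : ContinuousOn φ₂ (Icc a b))
    (hd₁ : ∀ x ∈ Ioo a b, HasDerivAt φ₁ (d₁ x) x) (hd₂ : ∀ x ∈ Ioo a b, HasDerivAt φ₂ (d₂ x) x)
    (hb₁ : ∀ x ∈ Ioo a b, φ₂ x ≤ φ₁ x → d₁ x ≤ c)
    (hb₂ : ∀ x ∈ Ioo a b, φ₁ x ≤ φ₂ x → d₂ x ≤ c) :
    ∀ x ∈ Icc a b, max (φ₁ x) (φ₂ x) ≤ max (φ₁ a) (φ₂ a) + c * (x - a) := by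
  intro x hx
  set M : ℝ → ℝ := fun t => max (φ₁ t) (φ₂ t)
  have hM : ContinuousOn M (Icc a b) := fun y hy => (hc₁ y hy).max (hc₂ y hy)
  -- Mathlib's comparison lemma needs derivatives at the left endpoint, so start at `a' > a`
  -- and let `a' → a` using continuity.
  have hinterior : ∀ a' ∈ Ioc a x, M x ≤ M a' + c * (x - a') := by
    intro a' ha'
    have hsub : Ico a' x ⊆ Ioo a b := fun y hy => ⟨ha'.1.trans_le hy.1, hy.2.trans_le hx.2⟩
    refine image_le_of_liminf_slope_right_le_deriv_boundary
      (hM.mono (Icc_subset_Icc ha'.1.le hx.2)) (B := fun t => M a' + c * (t - a'))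
      (B' := fun _ => c) (by simp) (by fun_prop) (fun y _ => ?_) (fun y hy r hr => ?_)
      ⟨ha'.2, le_rfl⟩
    · exact ((((hasDerivAt_id y).sub_const a').const_mul c).const_add _).hasDerivWithinAt
        |>.congr_deriv (by simp)
    · refine (eventually_slope_max_lt (hd₁ y (hsub hy)) (hd₂ y (hsub hy)) ?_ ?_).frequently
      · exact fun h => (hb₁ y (hsub hy) h).trans_lt hr
      · exact fun h => (hb₂ y (hsub hy) h).trans_lt hr
  rcases hx.1.eq_or_lt with rfl | hax
  · simp
  have := left_nhdsWithin_Ioc_neBot hax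
  have hlim : Tendsto (fun a' => M a' + c * (x - a')) (𝓝[Ioc a x] a) (𝓝 (M a + c * (x - a))) :=
    (((hM a ⟨le_rfl, hax.le.trans hx.2⟩).mono
      (Ioc_subset_Icc_self.trans (Icc_subset_Icc_right hx.2))).add
      (continuousWithinAt_const.mul (continuousWithinAt_const.sub continuousWithinAt_id))).tendsto
  exact ge_of_tendsto hlim (eventually_mem_nhdsWithin.mono hinterior)

theorem min_add_mul_le_min_of_le_deriv {φ₁ φ₂ d₁ d₂ : ℝ → ℝ} {a b c : ℝ}
    (hc₁ : ContinuousOn φ₁ (Icc a b)) (hc₂ : ContinuousOn φ₂ (Icc a b))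
    (hd₁ : ∀ x ∈ Ioo a b, HasDerivAt φ₁ (d₁ x) x) (hd₂ : ∀ x ∈ Ioo a b, HasDerivAt φ₂ (d₂ x) x)
    (hb₁ : ∀ x ∈ Ioo a b, φ₁ x ≤ φ₂ x → c ≤ d₁ x)
    (hb₂ : ∀ x ∈ Ioo a b, φ₂ x ≤ φ₁ x → c ≤ d₂ x) :
    ∀ x ∈ Icc a b, min (φ₁ a) (φ₂ a) + c * (x - a) ≤ min (φ₁ x) (φ₂ x) := by
  intro x hx
  have := max_le_max_add_mul_of_deriv_le (d₁ := -d₁) (d₂ := -d₂) (c := -c) hc₁.neg hc₂.neg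
    (fun y hy => (hd₁ y hy).neg) (fun y hy => (hd₂ y hy).neg)
    (fun y hy h => neg_le_neg (hb₁ y hy (neg_le_neg_iff.1 h)))
    (fun y hy h => neg_le_neg (hb₂ y hy (neg_le_neg_iff.1 h))) x hx
  simp only [Pi.neg_apply, max_neg_neg] at this
  linarith

theorem rpow_mul_neg_two_mul_rpow_neg_add_rpow_neg {x y : ℝ} (β : ℝ) (hx : 0 < x) (hy : 0 < y) :
    x ^ β * (-2 * x ^ (-β) + y ^ (-β)) = (x / y) ^ β - 2 := by
  have hxβ : x ^ β ≠ 0 := (Real.rpow_pos_of_pos hx β).ne'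
  rw [Real.div_rpow hx.le hy.le, Real.rpow_neg hx.le, Real.rpow_neg hy.le]
  field_simp
  ring

theorem hasDerivAt_rpow_succ_comp_neg {Y W : ℝ → ℝ} {β τ : ℝ}
    (hY : HasDerivAt Y (-2 * Y (-τ) ^ (-β) + W (-τ) ^ (-β)) (-τ))
    (hYpos : 0 < Y (-τ)) (hWpos : 0 < W (-τ)) :
    HasDerivAt (fun s => Y (-s) ^ (β + 1)) ((β + 1) * (2 - (Y (-τ) / W (-τ)) ^ β)) τ := by
  have h := (hY.rpow_const (p := β + 1) (Or.inl hYpos.ne')).comp τ (hasDerivAt_neg τ)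
  refine h.congr_deriv ?_
  rw [add_sub_cancel_right]
  linear_combination (-(β + 1)) * rpow_mul_neg_two_mul_rpow_neg_add_rpow_neg β hYpos hWpos

theorem succ_mul_two_sub_div_rpow_le {β x y : ℝ} (hβ : 0 ≤ β) (hx : 0 < x) (hy : 0 < y)
    (h : y ^ (β + 1) ≤ x ^ (β + 1)) : (β + 1) * (2 - (x / y) ^ β) ≤ β + 1 := by
  have hyx : y ≤ x := (Real.rpow_le_rpow_iff hy.le hx.le (by linarith)).1 h
  have : 1 ≤ (x / y) ^ β := Real.one_le_rpow ((one_le_div hy).2 hyx) hβ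
  nlinarith

theorem le_succ_mul_two_sub_div_rpow {β x y : ℝ} (hβ : 0 ≤ β) (hx : 0 < x) (hy : 0 < y)
    (h : x ^ (β + 1) ≤ y ^ (β + 1)) : β + 1 ≤ (β + 1) * (2 - (x / y) ^ β) := by
  have hxy : x ≤ y := (Real.rpow_le_rpow_iff hx.le hy.le (by linarith)).1 h
  have : (x / y) ^ β ≤ 1 := Real.rpow_le_one (div_nonneg hx.le hy.le) ((div_le_one hy).2 hxy) hβ
  nlinarith

theorem two_particle_rpow_succ_bounds {β : ℝ} (hβ : 0 ≤ β) {Y₁ Y₂ : ℝ → ℝ}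
    (hpos : ∀ t < (-1 : ℝ), 0 < Y₁ t ∧ 0 < Y₂ t)
    (heq₁ : ∀ t < (-1 : ℝ), HasDerivAt Y₁ (-2 * (Y₁ t) ^ (-β) + (Y₂ t) ^ (-β)) t)
    (heq₂ : ∀ t < (-1 : ℝ), HasDerivAt Y₂ (-2 * (Y₂ t) ^ (-β) + (Y₁ t) ^ (-β)) t)
    (hcont₁ : ContinuousOn Y₁ (Iic (-1))) (hcont₂ : ContinuousOn Y₂ (Iic (-1)))
    {t : ℝ} (ht : t ≤ -1) :
    max (Y₁ t ^ (β + 1)) (Y₂ t ^ (β + 1))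
        ≤ max (Y₁ (-1) ^ (β + 1)) (Y₂ (-1) ^ (β + 1)) + (β + 1) * (-1 - t) ∧
      min (Y₁ (-1) ^ (β + 1)) (Y₂ (-1) ^ (β + 1)) + (β + 1) * (-1 - t)
        ≤ min (Y₁ t ^ (β + 1)) (Y₂ t ^ (β + 1)) := by
  set Z₁ : ℝ → ℝ := fun s => Y₁ (-s) ^ (β + 1)
  set Z₂ : ℝ → ℝ := fun s => Y₂ (-s) ^ (β + 1)
  have hneg : MapsTo (fun s : ℝ => -s) (Icc 1 (-t)) (Iic (-1)) :=
    fun s hs => by simp only [mem_Iic]; linarith [hs.1]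
  have hZc₁ : ContinuousOn Z₁ (Icc 1 (-t)) :=
    (hcont₁.comp continuousOn_neg hneg).rpow_const fun _ _ => Or.inr (by linarith)
  have hZc₂ : ContinuousOn Z₂ (Icc 1 (-t)) :=
    (hcont₂.comp continuousOn_neg hneg).rpow_const fun _ _ => Or.inr (by linarith)
  have hposs : ∀ s ∈ Ioo 1 (-t), 0 < Y₁ (-s) ∧ 0 < Y₂ (-s) :=
    fun s hs => hpos _ (by linarith [hs.1])
  have hd₁ : ∀ s ∈ Ioo 1 (-t), HasDerivAt Z₁ ((β + 1) * (2 - (Y₁ (-s) / Y₂ (-s)) ^ β)) s :=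
    fun s hs => hasDerivAt_rpow_succ_comp_neg (heq₁ _ (by linarith [hs.1]))
      (hposs s hs).1 (hposs s hs).2
  have hd₂ : ∀ s ∈ Ioo 1 (-t), HasDerivAt Z₂ ((β + 1) * (2 - (Y₂ (-s) / Y₁ (-s)) ^ β)) s :=
    fun s hs => hasDerivAt_rpow_succ_comp_neg (heq₂ _ (by linarith [hs.1]))
      (hposs s hs).2 (hposs s hs).1
  have hT : -t ∈ Icc 1 (-t) := ⟨by linarith, le_rfl⟩
  have hupper := max_le_max_add_mul_of_deriv_le hZc₁ hZc₂ hd₁ hd₂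
    (fun s hs => succ_mul_two_sub_div_rpow_le hβ (hposs s hs).1 (hposs s hs).2)
    (fun s hs => succ_mul_two_sub_div_rpow_le hβ (hposs s hs).2 (hposs s hs).1) (-t) hT
  have hlower := min_add_mul_le_min_of_le_deriv hZc₁ hZc₂ hd₁ hd₂
    (fun s hs => le_succ_mul_two_sub_div_rpow hβ (hposs s hs).1 (hposs s hs).2)
    (fun s hs => le_succ_mul_two_sub_div_rpow hβ (hposs s hs).2 (hposs s hs).1) (-t) hT
  simp only [Z₁, Z₂, neg_neg] at hupper hlower
  constructor <;> linarith

theorem stmt14 (β : ℝ) (hβ : 0 < β) (Y₁ Y₂ : ℝ → ℝ)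
    (hpos : ∀ t < (-1 : ℝ), 0 < Y₁ t ∧ 0 < Y₂ t)
    (heq₁ : ∀ t < (-1 : ℝ), HasDerivAt Y₁ (-2 * (Y₁ t) ^ (-β) + (Y₂ t) ^ (-β)) t)
    (heq₂ : ∀ t < (-1 : ℝ), HasDerivAt Y₂ (-2 * (Y₂ t) ^ (-β) + (Y₁ t) ^ (-β)) t)
    (hY₁ : Y₁ (-1) = (4 * (β + 1)) ^ (1 / (β + 1)))
    (hY₂ : Y₂ (-1) = 0)
    (hcont₁ : ContinuousOn Y₁ (Set.Iic (-1 : ℝ)))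
    (hcont₂ : ContinuousOn Y₂ (Set.Iic (-1 : ℝ))) :
    ∀ t ≤ (-1 : ℝ),
      ((β + 1) * (-1 - t)) ^ (1 / (β + 1)) ≤ min (Y₁ t) (Y₂ t) ∧
      max (Y₁ t) (Y₂ t) ≤ ((β + 1) * (3 - t)) ^ (1 / (β + 1)) := by
  intro t ht
  have hβ1 : 0 < β + 1 := by linarith
  obtain ⟨hupper, hlower⟩ := two_particle_rpow_succ_bounds hβ.le hpos heq₁ heq₂ hcont₁ hcont₂ ht
  have h4 : (0 : ℝ) ≤ 4 * (β + 1) := by positivity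
  have hY₁' : Y₁ (-1) ^ (β + 1) = 4 * (β + 1) := by
    rw [hY₁, one_div, Real.rpow_inv_rpow h4 hβ1.ne']
  rw [hY₁', hY₂, Real.zero_rpow hβ1.ne', max_eq_left h4, max_le_iff] at hupper
  rw [hY₁', hY₂, Real.zero_rpow hβ1.ne', min_eq_right h4, zero_add, le_min_iff] at hlower
  have hnonneg : 0 ≤ Y₁ t ∧ 0 ≤ Y₂ t := by
    rcases ht.lt_or_eq with ht | rfl
    · exact ⟨(hpos t ht).1.le, (hpos t ht).2.le⟩
    · exact ⟨hY₁ ▸ by positivity, hY₂.ge⟩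
  have hL : 0 ≤ (β + 1) * (-1 - t) := mul_nonneg hβ1.le (by linarith)
  have hU : 0 ≤ (β + 1) * (3 - t) := mul_nonneg hβ1.le (by linarith)
  rw [one_div]
  refine ⟨le_min ?_ ?_, max_le ?_ ?_⟩
  · exact (Real.rpow_inv_le_iff_of_pos hL hnonneg.1 hβ1).2 hlower.1
  · exact (Real.rpow_inv_le_iff_of_pos hL hnonneg.2 hβ1).2 hlower.2
  · exact (Real.le_rpow_inv_iff_of_pos hnonneg.1 hU hβ1).2 (by linarith [hupper.1])
  · exact (Real.le_rpow_inv_iff_of_pos hnonneg.2 hU hβ1).2 (by linarith [hupper.2])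
end

section
/- Let β > 0 and let W₁, W₂ : [0, ∞) → (0, ∞) be C¹ functions satisfying d/ds W_p = −W_p/(β+1) + 2 W_p^(−β) − W_{3−p}^(−β) for p = 1, 2. Then |W₁(s) − W₂(s)| ≤ |W₁(0) − W₂(0)| e^(−s/(β+1)) for all s ≥ 0. -/
/-!
The difference `u = W₁ - W₂` satisfies `u' = -u/(β+1) + 3 (W₁^(-β) - W₂^(-β))`, and the last
term has the sign opposite to `u` because `x ↦ x^(-β)` is decreasing. Hence
`u' · u ≤ -u²/(β+1)`, i.e. `(u(s) e^(s/(β+1)))²` is nonincreasing.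
-/

open Real Set

theorem antitoneOn_sq_mul_exp_of_mul_deriv_add_nonpos {u u' : ℝ → ℝ} (c : ℝ)
    (hu : ∀ t, 0 ≤ t → HasDerivAt u (u' t) t)
    (hdecay : ∀ t, 0 ≤ t → u t * (u' t + c * u t) ≤ 0) :
    AntitoneOn (fun t => (u t * exp (c * t)) ^ 2) (Ici 0) := by
  have hF : ∀ t, 0 ≤ t → HasDerivAt (fun t => (u t * exp (c * t)) ^ 2)
      (2 * exp (c * t) ^ 2 * (u t * (u' t + c * u t))) t := fun t ht => by
    have hexp : HasDerivAt (fun t => exp (c * t)) (exp (c * t) * c) t :=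
      ((hasDerivAt_id t).const_mul c).exp.congr_deriv (by simp)
    exact (((hu t ht).mul hexp).pow 2).congr_deriv (by simp only [Pi.mul_apply]; ring)
  refine antitoneOn_of_hasDerivWithinAt_nonpos (convex_Ici 0)
    (f' := fun t => 2 * exp (c * t) ^ 2 * (u t * (u' t + c * u t)))
    (fun t ht => (hF t ht).continuousAt.continuousWithinAt) (fun t ht => ?_) (fun t ht => ?_)
  all_goals rw [interior_Ici] at ht
  · exact (hF t ht.le).hasDerivWithinAt
  · exact mul_nonpos_of_nonneg_of_nonpos (by positivity) (hdecay t ht.le)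

theorem abs_le_abs_mul_exp_of_mul_deriv_add_nonpos {u u' : ℝ → ℝ} (c : ℝ)
    (hu : ∀ t, 0 ≤ t → HasDerivAt u (u' t) t)
    (hdecay : ∀ t, 0 ≤ t → u t * (u' t + c * u t) ≤ 0) {s : ℝ} (hs : 0 ≤ s) :
    |u s| ≤ |u 0| * exp (-(c * s)) := by
  have hsq : (u s * exp (c * s)) ^ 2 ≤ (u 0 * exp (c * 0)) ^ 2 :=
    antitoneOn_sq_mul_exp_of_mul_deriv_add_nonpos c hu hdecay self_mem_Ici hs hs
  have habs : |u s| * exp (c * s) ≤ |u 0| := by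
    simpa [abs_mul, abs_of_pos (exp_pos _)] using sq_le_sq.1 hsq
  rw [exp_neg, ← div_eq_mul_inv]
  exact (le_div_iff₀ (exp_pos _)).2 habs

theorem stmt15 (β : ℝ) (hβ : 0 < β) (W₁ W₂ : ℝ → ℝ)
    (hpos : ∀ s : ℝ, 0 ≤ s → 0 < W₁ s ∧ 0 < W₂ s)
    (heq₁ : ∀ s : ℝ, 0 ≤ s →
      HasDerivAt W₁ (-(W₁ s) / (β + 1) + 2 * (W₁ s) ^ (-β) - (W₂ s) ^ (-β)) s)
    (heq₂ : ∀ s : ℝ, 0 ≤ s →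
      HasDerivAt W₂ (-(W₂ s) / (β + 1) + 2 * (W₂ s) ^ (-β) - (W₁ s) ^ (-β)) s) :
    ∀ s : ℝ, 0 ≤ s →
      |W₁ s - W₂ s| ≤ |W₁ 0 - W₂ 0| * Real.exp (-s / (β + 1)) := by
  have hanti : AntivaryOn (fun x : ℝ => x ^ (-β)) id (Ioi 0) :=
    antivaryOn_id_iff.2 (antitoneOn_rpow_Ioi_of_exponent_nonpos (neg_nonpos.2 hβ.le))
  have hdecay : ∀ t, 0 ≤ t → (W₁ t - W₂ t) *
      ((-(W₁ t) / (β + 1) + 2 * W₁ t ^ (-β) - W₂ t ^ (-β)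
        - (-(W₂ t) / (β + 1) + 2 * W₂ t ^ (-β) - W₁ t ^ (-β))) + (β + 1)⁻¹ * (W₁ t - W₂ t)) ≤ 0 := by
    intro t ht
    have h := hanti.sub_mul_sub_nonpos (hpos t ht).2 (hpos t ht).1
    simp only [id] at h
    linear_combination 3 * h
  intro s hs
  convert abs_le_abs_mul_exp_of_mul_deriv_add_nonpos (u := fun t => W₁ t - W₂ t) (β + 1)⁻¹
    (fun t ht => (heq₁ t ht).sub (heq₂ t ht)) hdecay hs using 3
  ring
end

section
/- Let β > 0, τ̄ > 0, η ≥ 0, and let W₁, W₂ : [s₀, ∞) → [c, C] (0 < c ≤ C) be C¹ solutions of d/ds W_p = W_p + (β+1)(−2W_p^(−β) + W_{3−p}^(−β)) + G_p(s), p=1,2, where |G₁(s)| + |G₂(s)| ≤ (β+1) R^β η e^(−sβ) for some R > 0. If for some s₁ ≥ s₀ one has |W₁(s₁) − W₂(s₁)| > (β+1) R^β η e^(−s₁ β), then |W₁ − W₂| grows at least exponentially like e^(s − s₁) times a positive amount, contradicting boundedness; hence |W₁(s) − W₂(s)| ≤ (β+1) R^β η e^(−sβ) for all s ≥ s₀.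 -/
/-!
If `D = W₁ - W₂` ever exceeds the forcing bound `b(s₁)`, then from that time on
`D' ≥ D - b(s₁)` wherever `D > b(s₁)`, because the coupling term
`3(β+1)(W₂^(-β) - W₁^(-β))` has the sign of `D` and the forcing decays. A fencing argument
then makes `D - b(s₁)` grow exponentially, which contradicts `W₁, W₂ ∈ [c, C]`.
-/

open Set Filter Real

theorem add_mul_exp_le_of_deriv_ge_sub {D D' : ℝ → ℝ} {a m k : ℝ} (hk : k < 1)
    (hD : ∀ x, a ≤ x → HasDerivAt D (D' x) x)
    (hgrow : ∀ x, a ≤ x → m < D x → D x - m ≤ D' x) (ha : m < D a) :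
    ∀ x, a ≤ x → m + (D a - m) * exp (k * (x - a)) ≤ D x := by
  set g : ℝ → ℝ := fun x => m + (D a - m) * exp (k * (x - a))
  have hg : ∀ x, HasDerivAt g ((D a - m) * (exp (k * (x - a)) * k)) x := fun x =>
    ((((hasDerivAt_id x).sub_const a).const_mul k).exp.const_mul (D a - m)).const_add m
      |>.congr_deriv (by simp)
  intro x hx
  refine image_le_of_deriv_right_lt_deriv_boundary' (f := g) (B := D)
    (fun y _ => (hg y).continuousAt.continuousWithinAt) (fun y _ => (hg y).hasDerivWithinAt)
    (by simp [g]) (fun y hy => (hD y hy.1).continuousAt.continuousWithinAt)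
    (fun y hy => (hD y hy.1).hasDerivWithinAt) ?_ ⟨hx, le_rfl⟩
  intro y hy hgy
  have hpos : 0 < (D a - m) * exp (k * (y - a)) := mul_pos (sub_pos.2 ha) (exp_pos _)
  calc (D a - m) * (exp (k * (y - a)) * k) = k * ((D a - m) * exp (k * (y - a))) := by ring
    _ < (D a - m) * exp (k * (y - a)) := by nlinarith
    _ = D y - m := by rw [← hgy]; ring
    _ ≤ D' y := hgrow y hy.1 (by rw [← hgy]; linarith)

theorem le_of_deriv_ge_sub_of_bddAbove {D D' : ℝ → ℝ} {a m K : ℝ}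
    (hD : ∀ x, a ≤ x → HasDerivAt D (D' x) x)
    (hgrow : ∀ x, a ≤ x → m < D x → D x - m ≤ D' x) (hK : ∀ x, a ≤ x → D x ≤ K) :
    D a ≤ m := by
  by_contra! ha
  have hgrowth := add_mul_exp_le_of_deriv_ge_sub (k := 1 / 2) (by norm_num) hD hgrow ha
  have hlin : Tendsto (fun x => 1 / 2 * (x - a)) atTop atTop :=
    ((tendsto_atTop_add_const_right _ (-a) tendsto_id).congr fun x =>
      (sub_eq_add_neg x a).symm).const_mul_atTop (by norm_num)
  have htends : Tendsto (fun x => m + (D a - m) * exp (1 / 2 * (x - a))) atTop atTop :=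
    tendsto_atTop_add_const_left _ m <|
      (tendsto_exp_atTop.comp hlin).const_mul_atTop (sub_pos.2 ha)
  obtain ⟨x, hxa, hxK⟩ := ((eventually_ge_atTop a).and (htends.eventually_gt_atTop K)).exists
  linarith [hgrowth x hxa, hK x hxa]

theorem sub_le_of_hasDerivAt_pair {β c C s₀ : ℝ} {W₁ W₂ G₁ G₂ b : ℝ → ℝ} (hβ : 0 ≤ β)
    (hc : 0 < c) (hbd : ∀ s, s₀ ≤ s → W₁ s ∈ Icc c C ∧ W₂ s ∈ Icc c C)
    (heq₁ : ∀ s, s₀ ≤ s → HasDerivAt W₁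
      (W₁ s + (β + 1) * (-2 * (W₁ s) ^ (-β) + (W₂ s) ^ (-β)) + G₁ s) s)
    (heq₂ : ∀ s, s₀ ≤ s → HasDerivAt W₂
      (W₂ s + (β + 1) * (-2 * (W₂ s) ^ (-β) + (W₁ s) ^ (-β)) + G₂ s) s)
    (hG : ∀ s, s₀ ≤ s → |G₁ s| + |G₂ s| ≤ b s) (hb : AntitoneOn b (Ici s₀)) :
    ∀ s, s₀ ≤ s → W₁ s - W₂ s ≤ b s := by
  intro s₁ hs₁
  refine le_of_deriv_ge_sub_of_bddAbove (D := fun s => W₁ s - W₂ s) (a := s₁) (K := C - c)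
    (fun x hx => (heq₁ x (hs₁.trans hx)).sub (heq₂ x (hs₁.trans hx))) ?_
    (fun x hx => by
      obtain ⟨⟨-, h₁⟩, ⟨h₂, -⟩⟩ := hbd x (hs₁.trans hx)
      linarith)
  intro x hx hgt
  have hx₀ : s₀ ≤ x := hs₁.trans hx
  have hbx : b x ≤ b s₁ := hb hs₁ hx₀ hx
  have hGx := hG x hx₀
  have hcoupling : (W₁ x) ^ (-β) ≤ (W₂ x) ^ (-β) :=
    Real.rpow_le_rpow_of_nonpos (hc.trans_le (hbd x hx₀).2.1)
      (by linarith [abs_nonneg (G₁ x), abs_nonneg (G₂ x)]) (by linarith)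
  have : 0 ≤ (β + 1) * (3 * ((W₂ x) ^ (-β) - (W₁ x) ^ (-β))) := by
    have := sub_nonneg.2 hcoupling; positivity
  linarith [neg_abs_le (G₁ x), le_abs_self (G₂ x)]

theorem stmt16_general (β η R c C s₀ : ℝ) (hβ : 0 < β) (hη : 0 ≤ η) (hR : 0 < R)
    (hc : 0 < c)
    (W₁ W₂ G₁ G₂ : ℝ → ℝ)
    (hbd : ∀ s, s₀ ≤ s → W₁ s ∈ Set.Icc c C ∧ W₂ s ∈ Set.Icc c C)
    (heq₁ : ∀ s, s₀ ≤ s → HasDerivAt W₁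
      (W₁ s + (β + 1) * (-2 * (W₁ s) ^ (-β) + (W₂ s) ^ (-β)) + G₁ s) s)
    (heq₂ : ∀ s, s₀ ≤ s → HasDerivAt W₂
      (W₂ s + (β + 1) * (-2 * (W₂ s) ^ (-β) + (W₁ s) ^ (-β)) + G₂ s) s)
    (hG : ∀ s, s₀ ≤ s → |G₁ s| + |G₂ s| ≤ (β + 1) * R ^ β * η * Real.exp (-s * β)) :
    ∀ s, s₀ ≤ s → |W₁ s - W₂ s| ≤ (β + 1) * R ^ β * η * Real.exp (-s * β) := by
  have hdecay : Antitone fun s => (β + 1) * R ^ β * η * Real.exp (-s * β) := fun s t hst => by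
    dsimp only
    have : 0 ≤ (β + 1) * R ^ β * η := by positivity
    gcongr
  intro s hs
  rw [abs_sub_le_iff]
  exact ⟨sub_le_of_hasDerivAt_pair hβ.le hc hbd heq₁ heq₂ hG (hdecay.antitoneOn _) s hs,
    sub_le_of_hasDerivAt_pair hβ.le hc (fun s hs => (hbd s hs).symm) heq₂ heq₁
      (fun s hs => add_comm (|G₂ s|) _ ▸ hG s hs) (hdecay.antitoneOn _) s hs⟩

theorem stmt16 (β η R c C s₀ : ℝ) (hβ : 0 < β) (hη : 0 ≤ η) (hR : 0 < R)
    (hc : 0 < c) (hcC : c ≤ C)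
    (W₁ W₂ G₁ G₂ : ℝ → ℝ)
    (hbd : ∀ s, s₀ ≤ s → W₁ s ∈ Set.Icc c C ∧ W₂ s ∈ Set.Icc c C)
    (heq₁ : ∀ s, s₀ ≤ s → HasDerivAt W₁
      (W₁ s + (β + 1) * (-2 * (W₁ s) ^ (-β) + (W₂ s) ^ (-β)) + G₁ s) s)
    (heq₂ : ∀ s, s₀ ≤ s → HasDerivAt W₂
      (W₂ s + (β + 1) * (-2 * (W₂ s) ^ (-β) + (W₁ s) ^ (-β)) + G₂ s) s)
    (hG : ∀ s, s₀ ≤ s → |G₁ s| + |G₂ s| ≤ (β + 1) * R ^ β * η * Real.exp (-s * β)) :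
    ∀ s, s₀ ≤ s → |W₁ s - W₂ s| ≤ (β + 1) * R ^ β * η * Real.exp (-s * β) :=
  stmt16_general β η R c C s₀ hβ hη hR hc W₁ W₂ G₁ G₂ hbd heq₁ heq₂ hG
end
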